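/- For every real number r with 0 ≤ r ≤ 1 and every real a > 0 with a ≤ r/(1-r), and for every positive integer n, the truncated binomial sum satisfies (1/n) · log(∑_{k=⌈rn⌉}^{n} C(n,k) · a^k) ≤ r·log(a) + H₂(r), where H₂(r) = -r·log r - (1-r)·log(1-r) is the binary entropy (with the convention 0·log 0 = 0). -/

import Mathlib

/-!
Chernoff's trick. Write `a = θ x` with `x = r / (1 - r)` the odds of `r`, so that `θ ≤ 1`.
Every term of the truncated sum has `k ≥ r n`, hence `θ ^ k ≤ θ ^ (r n)`; dropping the
truncation then leaves `θ ^ (r n) (1 + x) ^ n = θ ^ (r n) (1 - r) ^ (-n)`, whose logarithm is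
exactly `n (r log a + H₂(r))`.
-/

open Finset Real

theorem sum_Icc_choose_mul_pow_le_rpow_mul_one_add_pow {θ x : ℝ} (m : ℝ) (n : ℕ)
    (hθ0 : 0 < θ) (hθ1 : θ ≤ 1) (hx : 0 ≤ x) :
    ∑ k ∈ Icc ⌈m⌉₊ n, (n.choose k : ℝ) * (θ * x) ^ k ≤ θ ^ m * (1 + x) ^ n := by
  have hθk : ∀ k ∈ Icc ⌈m⌉₊ n, θ ^ k ≤ θ ^ m := fun k hk => by
    rw [← rpow_natCast]
    exact rpow_le_rpow_of_exponent_ge hθ0 hθ1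
      ((Nat.le_ceil m).trans (by exact_mod_cast (mem_Icc.mp hk).1))
  calc ∑ k ∈ Icc ⌈m⌉₊ n, (n.choose k : ℝ) * (θ * x) ^ k
      = ∑ k ∈ Icc ⌈m⌉₊ n, θ ^ k * ((n.choose k : ℝ) * x ^ k) := by
        simp only [mul_pow, mul_left_comm]
    _ ≤ ∑ k ∈ Icc ⌈m⌉₊ n, θ ^ m * ((n.choose k : ℝ) * x ^ k) :=
        sum_le_sum fun k hk => by gcongr; exact hθk k hk
    _ ≤ ∑ k ∈ range (n + 1), θ ^ m * ((n.choose k : ℝ) * x ^ k) :=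
        sum_le_sum_of_subset_of_nonneg
          (fun k hk => mem_range.mpr (Nat.lt_succ_of_le (mem_Icc.mp hk).2))
          (fun _ _ _ => by positivity)
    _ = θ ^ m * (1 + x) ^ n := by
        rw [← mul_sum, add_comm 1 x, add_pow]
        simp only [one_pow, mul_one, mul_comm]

theorem pos_lt_one_of_div_one_sub_pos {r : ℝ} (h : 0 < r / (1 - r)) : 0 < r ∧ r < 1 := by
  rcases div_pos_iff.mp h with ⟨hr, h1r⟩ | ⟨hr, h1r⟩
  · exact ⟨hr, by linarith⟩
  · exact absurd hr (by linarith)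

theorem log_rpow_mul_one_add_odds_pow {r a : ℝ} (n : ℕ) (hr0 : 0 < r) (hr1 : r < 1)
    (ha : 0 < a) :
    log ((a / (r / (1 - r))) ^ (r * n) * (1 + r / (1 - r)) ^ n) =
      n * (r * log a + (-(r * log r) - (1 - r) * log (1 - r))) := by
  have h1r : 0 < 1 - r := by linarith
  have hodds : 1 + r / (1 - r) = (1 - r)⁻¹ := by field_simp; ring
  rw [hodds, log_mul (by positivity) (by positivity), log_rpow (by positivity), log_pow,
    log_inv, log_div ha.ne' (div_pos hr0 h1r).ne', log_div hr0.ne' h1r.ne']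
  ring

theorem truncated_binomial_log_bound_general (r a : ℝ) (n : ℕ)
    (ha : 0 < a) (har : a ≤ r / (1 - r)) (hn : 1 ≤ n) :
    (1 / (n : ℝ)) *
        Real.log (∑ k ∈ Finset.Icc ⌈r * (n : ℝ)⌉₊ n, (n.choose k : ℝ) * a ^ k) ≤
      r * Real.log a + (-(r * Real.log r) - (1 - r) * Real.log (1 - r)) := by
  obtain ⟨hr0, hr1⟩ := pos_lt_one_of_div_one_sub_pos (ha.trans_le har)
  have hn0 : (0 : ℝ) < n := by exact_mod_cast hn
  have hodds : 0 < r / (1 - r) := div_pos hr0 (sub_pos.mpr hr1)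
  have hceil : ⌈r * (n : ℝ)⌉₊ ≤ n := Nat.ceil_le.mpr (by nlinarith)
  have hsum_pos : 0 < ∑ k ∈ Icc ⌈r * (n : ℝ)⌉₊ n, (n.choose k : ℝ) * a ^ k :=
    sum_pos (fun k hk => by have := Nat.choose_pos (mem_Icc.mp hk).2; positivity)
      ⟨n, mem_Icc.mpr ⟨hceil, le_rfl⟩⟩
  have hchernoff := sum_Icc_choose_mul_pow_le_rpow_mul_one_add_pow (r * n) n
    (div_pos ha hodds) ((div_le_one hodds).mpr har) hodds.le
  rw [div_mul_cancel₀ a hodds.ne'] at hchernoff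
  rw [one_div, inv_mul_le_iff₀ hn0, ← log_rpow_mul_one_add_odds_pow n hr0 hr1 ha]
  exact log_le_log hsum_pos hchernoff

/-- Truncated binomial sum bound: for `0 ≤ r ≤ 1`, `0 < a ≤ r/(1-r)` and `n ≥ 1`,
`(1/n) log (∑_{k=⌈rn⌉}^n C(n,k) a^k) ≤ r log a + H₂(r)` (natural logs). -/
theorem truncated_binomial_log_bound (r a : ℝ) (n : ℕ)
    (hr0 : 0 ≤ r) (hr1 : r ≤ 1) (ha : 0 < a) (har : a ≤ r / (1 - r)) (hn : 1 ≤ n) :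
    (1 / (n : ℝ)) *
        Real.log (∑ k ∈ Finset.Icc ⌈r * (n : ℝ)⌉₊ n, (n.choose k : ℝ) * a ^ k) ≤
      r * Real.log a + (-(r * Real.log r) - (1 - r) * Real.log (1 - r)) :=
  truncated_binomial_log_bound_general r a n ha har hn
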